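/- arXiv:1412.7635 — 3 statements merged into one kernel-verified Lean document; each statement's English description precedes it below -/
import Mathlib

section
/- Let G be a finite group and H a proper subgroup of G. Then there exists a conjugacy class of G that is disjoint from H. Equivalently, no proper subgroup of a finite group intersects every conjugacy class of the group. -/
/-- Jordan's lemma: a proper subgroup of a finite group misses some conjugacy class,
i.e. there is a conjugacy class of `G` disjoint from `H`. -/
theorem stmt_0 {G : Type*} [Group G] [Finite G] (H : Subgroup G) (hH : H ≠ ⊤) :
    ∃ g : G, ∀ x : G, IsConj g x → x ∉ H := by
  classical
  have _instG := Fintype.ofFinite G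
  have _instQ := Fintype.ofFinite (G ⧸ H)
  by_contra hcon
  push_neg at hcon
  -- the quotient is nontrivial
  obtain ⟨a, haH⟩ : ∃ a : G, a ∉ H := by
    by_contra h
    push_neg at h
    exact hH ((Subgroup.eq_top_iff' H).2 h)
  have hnt : Nontrivial (G ⧸ H) := by
    refine ⟨⟨(a : G ⧸ H), ((1 : G) : G ⧸ H), fun h => haH ?_⟩⟩
    simpa using QuotientGroup.eq.mp h
  -- every g has a fixed point on G ⧸ H
  have hfix : ∀ g : G, (MulAction.fixedBy (G ⧸ H) g).Nonempty := by
    intro g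
    obtain ⟨x, hx, hxH⟩ := hcon g
    obtain ⟨c, hc⟩ := hx
    refine ⟨QuotientGroup.mk ((c : G))⁻¹, ?_⟩
    rw [MulAction.mem_fixedBy, MulAction.Quotient.smul_mk, QuotientGroup.eq]
    have hx' : (c : G) * g * (c : G)⁻¹ = x := by
      have h1 : (c : G) * g = x * (c : G) := hc
      rw [h1]; group
    have hkey : (g • ((c : G))⁻¹)⁻¹ * ((c : G))⁻¹ = x⁻¹ := by
      rw [smul_eq_mul, ← hx']; group
    rw [hkey]
    exact H.inv_mem hxH
  -- Burnside's lemma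
  have _instFix : ∀ g : G, Fintype (MulAction.fixedBy (G ⧸ H) g) :=
    fun g => Fintype.ofFinite _
  have _instΩ := Fintype.ofFinite (MulAction.orbitRel.Quotient G (G ⧸ H))
  have hburn := MulAction.sum_card_fixedBy_eq_card_orbits_mul_card_group G (G ⧸ H)
  haveI hsub : Subsingleton (MulAction.orbitRel.Quotient G (G ⧸ H)) :=
    (MulAction.pretransitive_iff_subsingleton_quotient G (G ⧸ H)).1 inferInstance
  have hΩ : Fintype.card (MulAction.orbitRel.Quotient G (G ⧸ H)) = 1 := by
    have hne : Nonempty (MulAction.orbitRel.Quotient G (G ⧸ H)) :=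
      ⟨Quotient.mk'' ((1 : G) : G ⧸ H)⟩
    exact Fintype.card_eq_one_iff.mpr ⟨hne.some, fun y => Subsingleton.elim y _⟩
  rw [hΩ, one_mul] at hburn
  -- lower bound on the sum
  have h1 : ∀ g : G, 1 ≤ Fintype.card (MulAction.fixedBy (G ⧸ H) g) := by
    intro g
    have := (hfix g).to_subtype
    exact Fintype.card_pos_iff.mpr this
  have h2 : 2 ≤ Fintype.card (MulAction.fixedBy (G ⧸ H) (1 : G)) := by
    have huniv : MulAction.fixedBy (G ⧸ H) (1 : G) = Set.univ :=
      MulAction.fixedBy_one_eq_univ (G ⧸ H) G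
    have hn : Nat.card (MulAction.fixedBy (G ⧸ H) (1 : G)) = Nat.card (G ⧸ H) := by
      rw [huniv, Nat.card_univ]
    rw [← Nat.card_eq_fintype_card, hn, Nat.card_eq_fintype_card]
    exact Fintype.one_lt_card
  have hlt : Fintype.card G <
      ∑ g : G, Fintype.card (MulAction.fixedBy (G ⧸ H) g) := by
    calc Fintype.card G = ∑ _g : G, 1 := by simp
    _ < ∑ g : G, Fintype.card (MulAction.fixedBy (G ⧸ H) g) :=
      Finset.sum_lt_sum (fun g _ => h1 g) ⟨1, Finset.mem_univ _, by omega⟩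
  omega
end

section
/- Let A be a discrete valuation ring with valuation v and uniformizer x, and let m ∈ A[T] with t₀ ∈ A satisfying v(m(t₀)) > 0 and v(m'(t₀)) = 0. Then v(m(t₀)) = 1 or v(m(t₀ + x)) = 1. -/
open IsDiscreteValuationRing Polynomial

/-- In `m (t₀ + a) = m t₀ + m' t₀ * a + k * a ^ 2` the middle term has valuation exactly `v a`
and the other two strictly larger. -/
theorem AddValuation.map_eval_add_of_lt {R : Type*} [CommRing R] (v : AddValuation R ℕ∞)
    (m : R[X]) (t₀ a : R) (hd : v (m.derivative.eval t₀) = 0) (ha : 0 < v a)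
    (hlt : v a < v (m.eval t₀)) :
    v (m.eval (t₀ + a)) = v a := by
  obtain ⟨k, hk⟩ := m.binomExpansion t₀ a
  have hlin : v (m.derivative.eval t₀ * a) = v a := by
    rw [v.map_mul, hd, zero_add]
  have hquad : v a < v (k * a ^ 2) :=
    calc v a < v a + v a := ENat.lt_add_left hlt.ne_top ha
      _ = 2 • v a := (two_nsmul _).symm
      _ ≤ v k + 2 • v a := le_add_self
      _ = v (k * a ^ 2) := by rw [v.map_mul, v.map_pow]
  rw [hk, add_right_comm, v.map_add_eq_of_lt_right (hlin ▸ v.map_lt_add hlt hquad), hlin]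

/-- If `A` is a DVR with valuation `v` and uniformizer `x`, `m ∈ A[T]` and `t₀ ∈ A` satisfy
`v(m(t₀)) > 0` and `v(m'(t₀)) = 0`, then `v(m(t₀)) = 1` or `v(m(t₀ + x)) = 1`. -/
theorem stmt_4 {A : Type*} [CommRing A] [IsDomain A] [IsDiscreteValuationRing A]
    (x : A) (hx : Irreducible x) (m : Polynomial A) (t₀ : A)
    (h1 : 0 < addVal A (m.eval t₀)) (h2 : addVal A (m.derivative.eval t₀) = 0) :
    addVal A (m.eval t₀) = 1 ∨ addVal A (m.eval (t₀ + x)) = 1 := by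
  rcases (Order.one_le_iff_pos.mpr h1).eq_or_lt with h | h
  · exact Or.inl h.symm
  · right
    have hvx := addVal_uniformizer hx
    rw [← hvx] at h ⊢
    exact (addVal A).map_eval_add_of_lt m t₀ x h2 (hvx ▸ one_pos) h
end

section
/- There exist positive real constants c₁ and c₂ and a real number x₀ such that for all x ≥ x₀, c₁ · x ≤ log(∏_{p ≤ x, p prime} p) ≤ c₂ · x. -/
open Finset

lemma cb_le (n : ℕ) (hn : 1 ≤ n) :
    Nat.centralBinom n ≤ (2*n)^(Nat.sqrt (2*n) + 1) * ∏ p ∈ (range (2*n+1)).filter Nat.Prime, p := by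
  have h2n : 0 < 2 * n := by omega
  rw [← Nat.prod_pow_factorization_centralBinom n]
  rw [← Finset.prod_filter_mul_prod_filter_not (range (2*n+1)) Nat.Prime]
  have hnp : ∏ p ∈ (range (2*n+1)).filter (fun p => ¬ p.Prime),
      p ^ (Nat.centralBinom n).factorization p = 1 := by
    apply Finset.prod_eq_one
    intro p hp
    rw [Nat.factorization_eq_zero_of_not_prime _ (mem_filter.1 hp).2, pow_zero]
  rw [hnp, mul_one]
  rw [← Finset.prod_filter_mul_prod_filter_not ((range (2*n+1)).filter Nat.Prime)
    (fun p => p ^ 2 ≤ 2 * n)]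
  apply Nat.mul_le_mul
  · -- small primes: p^2 ≤ 2n
    calc ∏ p ∈ ((range (2*n+1)).filter Nat.Prime).filter (fun p => p ^ 2 ≤ 2 * n),
          p ^ (Nat.centralBinom n).factorization p
        ≤ ∏ _p ∈ ((range (2*n+1)).filter Nat.Prime).filter (fun p => p ^ 2 ≤ 2 * n), (2 * n) :=
          Finset.prod_le_prod' (fun p _ => Nat.pow_factorization_choose_le h2n)
      _ = (2 * n) ^ #(((range (2*n+1)).filter Nat.Prime).filter (fun p => p ^ 2 ≤ 2 * n)) :=
          Finset.prod_const _
      _ ≤ (2*n)^(Nat.sqrt (2*n) + 1) := by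
          apply Nat.pow_le_pow_right h2n
          have : ((range (2*n+1)).filter Nat.Prime).filter (fun p => p ^ 2 ≤ 2 * n)
              ⊆ range (Nat.sqrt (2*n) + 1) := by
            intro p hp
            simp only [mem_filter, mem_range] at hp ⊢
            have := hp.2
            have : p ≤ Nat.sqrt (2*n) := Nat.le_sqrt.2 (by nlinarith [hp.2])
            omega
          calc _ ≤ #(range (Nat.sqrt (2*n) + 1)) := Finset.card_le_card this
            _ = Nat.sqrt (2*n) + 1 := by simp
  · -- large primes: multiplicity ≤ 1
    calc ∏ p ∈ ((range (2*n+1)).filter Nat.Prime).filter (fun p => ¬ p ^ 2 ≤ 2 * n),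
          p ^ (Nat.centralBinom n).factorization p
        ≤ ∏ p ∈ ((range (2*n+1)).filter Nat.Prime).filter (fun p => ¬ p ^ 2 ≤ 2 * n), p := by
          apply Finset.prod_le_prod'
          intro p hp
          simp only [mem_filter, not_le] at hp
          have h1 : (Nat.centralBinom n).factorization p ≤ 1 :=
            Nat.factorization_choose_le_one hp.2
          calc p ^ (Nat.centralBinom n).factorization p ≤ p ^ 1 :=
                Nat.pow_le_pow_right hp.1.2.pos h1
            _ = p := pow_one p
      _ ≤ ∏ p ∈ (range (2*n+1)).filter Nat.Prime, p := by
          apply Finset.prod_le_prod_of_subset_of_one_le' (Finset.filter_subset _ _)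
          intro p hp _
          exact (mem_filter.1 hp).2.one_lt.le

lemma primorial_lb (n : ℕ) (hn : 4 ≤ n) :
    4 ^ n ≤ n * ((2*n)^(Nat.sqrt (2*n) + 1) * ∏ p ∈ (range (2*n+1)).filter Nat.Prime, p) :=
  le_trans (Nat.four_pow_lt_mul_centralBinom n hn).le
    (Nat.mul_le_mul_left n (cb_le n (by omega)))


open Filter Asymptotics in
lemma err_littleO :
    (fun x : ℝ => Real.sqrt x * Real.log x + 2 * Real.log x + Real.log 4)
      =o[atTop] (id : ℝ → ℝ) := by
  have h1 : (fun x : ℝ => Real.sqrt x * Real.log x) =o[atTop] (id : ℝ → ℝ) := by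
    have := (isBigO_refl Real.sqrt atTop).mul_isLittleO
      (isLittleO_log_rpow_atTop (by norm_num : (0:ℝ) < 1/2))
    refine this.trans_eventuallyEq ?_
    filter_upwards [eventually_ge_atTop (0:ℝ)] with x hx
    simp only [id]
    rw [← Real.sqrt_eq_rpow]
    exact Real.mul_self_sqrt hx
  have h2 : (fun x : ℝ => 2 * Real.log x) =o[atTop] (id : ℝ → ℝ) :=
    Real.isLittleO_log_id_atTop.const_mul_left 2
  have h3 : (fun _ : ℝ => Real.log 4) =o[atTop] (id : ℝ → ℝ) :=
    isLittleO_const_id_atTop _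
  exact (h1.add h2).add h3

/-- Chebyshev's estimate: there are positive constants `c₁, c₂` with
`c₁ · x ≤ log ∏_{p ≤ x prime} p ≤ c₂ · x` for all sufficiently large `x`. -/
theorem stmt_14 :
    ∃ c₁ c₂ : ℝ, 0 < c₁ ∧ 0 < c₂ ∧ ∃ x₀ : ℝ, ∀ x : ℝ, x₀ ≤ x →
      c₁ * x ≤ Real.log (∏ p ∈ (Finset.range (⌊x⌋₊ + 1)).filter Nat.Prime, (p : ℝ)) ∧
        Real.log (∏ p ∈ (Finset.range (⌊x⌋₊ + 1)).filter Nat.Prime, (p : ℝ)) ≤ c₂ * x := by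
  have hlog4 : (1:ℝ) ≤ Real.log 4 := by
    rw [Real.le_log_iff_exp_le (by norm_num)]
    exact le_of_lt (lt_of_lt_of_le Real.exp_one_lt_d9 (by norm_num))
  refine ⟨Real.log 4 / 2 - 1/5, Real.log 4, by linarith, by linarith, ?_⟩
  have hev := err_littleO.def (by norm_num : (0:ℝ) < 1/5)
  rw [Filter.eventually_atTop] at hev
  obtain ⟨X, hX⟩ := hev
  refine ⟨max X 10, fun x hx => ?_⟩
  have hx10 : (10:ℝ) ≤ x := le_trans (le_max_right _ _) hx
  have hxX : X ≤ x := le_trans (le_max_left _ _) hx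
  set m := ⌊x⌋₊ with hm
  have hm10 : 10 ≤ m := Nat.le_floor (by exact_mod_cast hx10)
  have hmx : (m:ℝ) ≤ x := Nat.floor_le (by linarith)
  have hxm : x - 1 ≤ (m:ℝ) := (Nat.sub_one_lt_floor x).le
  set n := m / 2 with hn
  have hn4 : 4 ≤ n := by omega
  have h2nm : 2 * n ≤ m := by omega
  have hm2n : m ≤ 2 * n + 1 := by omega
  -- the products
  set P : ℕ := ∏ p ∈ (range (m+1)).filter Nat.Prime, p with hP
  set Pn : ℕ := ∏ p ∈ (range (2*n+1)).filter Nat.Prime, p with hPn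
  have hPnP : Pn ≤ P := by
    apply Finset.prod_le_prod_of_subset_of_one_le'
    · apply Finset.filter_subset_filter
      apply Finset.range_subset_range.2
      omega
    · intro p hp _
      exact (mem_filter.1 hp).2.one_lt.le
  have hPnpos : 0 < Pn := Finset.prod_pos fun p hp => (mem_filter.1 hp).2.pos
  have hPpos : 0 < P := Finset.prod_pos fun p hp => (mem_filter.1 hp).2.pos
  have hgoalP : (∏ p ∈ (Finset.range (⌊x⌋₊ + 1)).filter Nat.Prime, (p : ℝ)) = (P:ℝ) := by
    rw [hP]; push_cast; rfl
  rw [hgoalP]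
  constructor
  · -- lower bound
    have key : (4:ℝ)^n ≤ (n:ℝ) * ((2*n:ℕ)^(Nat.sqrt (2*n) + 1) * (Pn:ℝ)) := by
      exact_mod_cast primorial_lb n hn4
    have hlogkey : (n:ℝ) * Real.log 4 ≤
        Real.log n + ((Nat.sqrt (2*n) + 1 : ℕ) * Real.log (2*n:ℕ) + Real.log Pn) := by
      have h1 : Real.log ((4:ℝ)^n) ≤ Real.log ((n:ℝ) * ((2*n:ℕ)^(Nat.sqrt (2*n) + 1) * (Pn:ℝ))) :=
        Real.log_le_log (by positivity) key
      rw [Real.log_pow, Real.log_mul (by positivity) (by positivity),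
        Real.log_mul (by positivity) (by positivity), Real.log_pow] at h1
      exact_mod_cast h1
    -- bounds on pieces
    have h2nm' : 2*(n:ℝ) ≤ (m:ℝ) := by exact_mod_cast h2nm
    have hm2n' : (m:ℝ) ≤ 2*(n:ℝ) + 1 := by exact_mod_cast hm2n
    have h2nx : ((2*n:ℕ):ℝ) ≤ x := by push_cast; linarith
    have hnx2 : (x - 2)/2 ≤ (n:ℝ) := by linarith
    have hnpos : (1:ℝ) ≤ (n:ℝ) := by exact_mod_cast (by omega : 1 ≤ n)
    have hlogn : Real.log n ≤ Real.log x := Real.log_le_log (by linarith) (by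
      have : ((2*n:ℕ):ℝ) ≤ x := h2nx
      push_cast at this ⊢; linarith)
    have hlog2n : Real.log (2*n:ℕ) ≤ Real.log x := Real.log_le_log (by
        have : (8:ℝ) ≤ ((2*n:ℕ):ℝ) := by exact_mod_cast (by omega : 8 ≤ 2*n)
        linarith) h2nx
    have hlog2npos : 0 ≤ Real.log (2*n:ℕ) := Real.log_nonneg (by
      exact_mod_cast (by omega : 1 ≤ 2*n))
    have hlogxpos : 0 ≤ Real.log x := Real.log_nonneg (by linarith)
    have hs : ((Nat.sqrt (2*n):ℕ):ℝ) ≤ Real.sqrt x := by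
      calc ((Nat.sqrt (2*n):ℕ):ℝ) ≤ Real.sqrt ((2*n:ℕ):ℝ) := Real.nat_sqrt_le_real_sqrt
        _ ≤ Real.sqrt x := Real.sqrt_le_sqrt h2nx
    have hsx : (((Nat.sqrt (2*n) + 1 : ℕ)):ℝ) * Real.log (2*n:ℕ)
        ≤ (Real.sqrt x + 1) * Real.log x := by
      apply mul_le_mul _ hlog2n hlog2npos (by positivity)
      push_cast
      linarith
    have hPnP' : Real.log Pn ≤ Real.log P :=
      Real.log_le_log (by exact_mod_cast hPnpos) (by exact_mod_cast hPnP)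
    have herr : Real.sqrt x * Real.log x + 2 * Real.log x + Real.log 4 ≤ 1/5 * x := by
      have := hX x hxX
      rw [Real.norm_eq_abs, Real.norm_eq_abs, id] at this
      calc Real.sqrt x * Real.log x + 2 * Real.log x + Real.log 4
          ≤ |Real.sqrt x * Real.log x + 2 * Real.log x + Real.log 4| := le_abs_self _
        _ ≤ 1/5 * |x| := this
        _ = 1/5 * x := by rw [abs_of_nonneg (by linarith)]
    have hnlog : (x - 2)/2 * Real.log 4 ≤ (n:ℝ) * Real.log 4 :=
      mul_le_mul_of_nonneg_right hnx2 (by linarith)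
    have expand : (Real.sqrt x + 1) * Real.log x = Real.sqrt x * Real.log x + Real.log x := by ring
    nlinarith [hlogkey, hnlog, hlogn, hsx, hPnP', herr]
  · -- upper bound
    have h4 : P ≤ 4 ^ m := primorial_le_4_pow m
    calc Real.log P ≤ Real.log ((4:ℝ)^m) :=
          Real.log_le_log (by exact_mod_cast hPpos) (by exact_mod_cast h4)
      _ = (m:ℝ) * Real.log 4 := by rw [Real.log_pow]
      _ ≤ x * Real.log 4 := mul_le_mul_of_nonneg_right hmx (by linarith)
      _ = Real.log 4 * x := mul_comm _ _
end
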